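/- arXiv:2307.08762 — 4 statements merged into one kernel-verified Lean document; each statement's English description precedes it below -/
import Mathlib

section
/- Let $\mu\in\mathbb{R}^n\setminus\{0\}$, $\alpha\in(0,1/2)$, and define $Y(x) = \|x\|^{-2\alpha}x - \|x+\mu\|^{-2\alpha}(x+\mu)$ for $x\in\mathbb{R}^n\setminus\{0,-\mu\}$. Then the function $\phi(x) = Y(x)^\top Y(x)$ attains its global maximum at $x = -\mu/2$. -/
open Real

private lemma sq_rpow_aux {u : ℝ} (hu : 0 ≤ u) (β : ℝ) : (u ^ 2) ^ β = (u ^ β) ^ 2 := by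
  rw [← Real.rpow_natCast u 2, ← Real.rpow_mul hu, ← Real.rpow_natCast (u ^ β) 2,
    ← Real.rpow_mul hu]
  norm_num [mul_comm]

private lemma midpt_aux {β r s : ℝ} (hβ0 : 0 < β) (hβ1 : β < 1) (hr : 0 ≤ r) (hs : 0 ≤ s) :
    r ^ β + s ^ β ≤ 2 / 2 ^ β * (r + s) ^ β := by
  have h := (Real.concaveOn_rpow hβ0.le hβ1.le).2 (Set.mem_Ici.2 hr) (Set.mem_Ici.2 hs)
      (by norm_num : (0:ℝ) ≤ (1/2:ℝ)) (by norm_num : (0:ℝ) ≤ (1/2:ℝ)) (by norm_num)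
  simp only [smul_eq_mul] at h
  have hmid : ((1:ℝ)/2) * r + (1/2) * s = (r + s)/2 := by ring
  rw [hmid, Real.div_rpow (by linarith) (by norm_num)] at h
  have h2 : (0:ℝ) < (2:ℝ) ^ β := Real.rpow_pos_of_pos (by norm_num) β
  rw [le_div_iff₀ h2] at h
  rw [div_mul_eq_mul_div, le_div_iff₀ h2]
  nlinarith [h]

private lemma rpow_sub_le_aux {β r s : ℝ} (hβ0 : 0 ≤ β) (hβ1 : β ≤ 1) (hs : 0 ≤ s)
    (hsr : s ≤ r) : r ^ β - s ^ β ≤ (r - s) ^ β := by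
  have h0 : (0:ℝ) ≤ r - s := by linarith
  have h := NNReal.rpow_add_le_add_rpow (⟨r - s, h0⟩ : NNReal) (⟨s, hs⟩ : NNReal) hβ0 hβ1
  have h' := NNReal.coe_le_coe.2 h
  simp only [NNReal.coe_rpow, NNReal.coe_add, NNReal.coe_mk] at h'
  change ((r - s) + s) ^ β ≤ (r - s) ^ β + s ^ β at h'
  have hr : r - s + s = r := by ring
  rw [hr] at h'
  linarith

set_option maxHeartbeats 1000000 in
private lemma keyineq {β r s d : ℝ} (hβ0 : 0 < β) (hβ1 : β < 1) (hr : 0 < r) (hs : 0 < s)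
    (hd : 0 < d) (h1 : |r - s| ≤ d) (h2 : d ≤ r + s) :
    (r ^ (β - 1)) ^ 2 * r ^ 2 + (s ^ (β - 1)) ^ 2 * s ^ 2
      - r ^ (β - 1) * s ^ (β - 1) * (r ^ 2 + s ^ 2 - d ^ 2)
      ≤ ((d / 2) ^ (β - 1)) ^ 2 * d ^ 2 := by
  have har : r ^ (β - 1) * r = r ^ β := by
    rw [Real.rpow_sub hr, Real.rpow_one, div_mul_cancel₀ _ hr.ne']
  have has : s ^ (β - 1) * s = s ^ β := by
    rw [Real.rpow_sub hs, Real.rpow_one, div_mul_cancel₀ _ hs.ne']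
  have hl1 : (r ^ (β - 1)) ^ 2 * r ^ 2 = (r ^ β) ^ 2 := by rw [← har]; ring
  have hl2 : (s ^ (β - 1)) ^ 2 * s ^ 2 = (s ^ β) ^ 2 := by rw [← has]; ring
  have hBrs : r ^ (β - 1) * s ^ (β - 1) * (r * s) = r ^ β * s ^ β := by
    rw [← har, ← has]; ring
  have hd2 : (0:ℝ) < d / 2 := by linarith
  have hcd : (d / 2) ^ (β - 1) * d = 2 * (d / 2) ^ β := by
    rw [Real.rpow_sub hd2, Real.rpow_one]; field_simp
  have hdiv : (d / 2) ^ β = d ^ β / 2 ^ β := by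
    rw [Real.div_rpow hd.le (by norm_num : (0:ℝ) ≤ 2)]
  have h2b : (0:ℝ) < (2:ℝ) ^ β := Real.rpow_pos_of_pos (by norm_num) β
  have hrhs : ((d / 2) ^ (β - 1)) ^ 2 * d ^ 2 = 4 / (2 ^ β) ^ 2 * (d ^ β) ^ 2 := by
    rw [← mul_pow, hcd, hdiv]
    field_simp
    ring
  rw [hl1, hl2, hrhs]
  set P := r ^ β with hP
  set Q := s ^ β with hQ
  set B := r ^ (β - 1) * s ^ (β - 1) with hB
  set C := 4 / ((2:ℝ) ^ β) ^ 2 with hC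
  have hCpos : 0 < C := by positivity
  have hC1 : 1 ≤ C := by
    have h22 : (2:ℝ) ^ β ≤ 2 := by
      calc (2:ℝ) ^ β ≤ 2 ^ (1:ℝ) :=
            Real.rpow_le_rpow_of_exponent_le (by norm_num) hβ1.le
        _ = 2 := Real.rpow_one 2
    rw [hC, le_div_iff₀ (by positivity)]
    nlinarith [h2b]
  have hPpos : 0 < P := Real.rpow_pos_of_pos hr β
  have hQpos : 0 < Q := Real.rpow_pos_of_pos hs β
  -- the three values of t
  set t₀ := (r - s) ^ 2 with ht₀
  set t₁ := (r + s) ^ 2 with ht₁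
  set t := d ^ 2 with ht
  have ht₀0 : (0:ℝ) ≤ t₀ := sq_nonneg _
  have ht₁0 : (0:ℝ) ≤ t₁ := sq_nonneg _
  have htle : t₀ ≤ t := by
    have h' : |r - s| ^ 2 ≤ d ^ 2 := pow_le_pow_left₀ (abs_nonneg _) h1 2
    rwa [sq_abs] at h'
  have htle' : t ≤ t₁ := pow_le_pow_left₀ hd.le h2 2
  have hgap : t₀ < t₁ := by nlinarith
  -- rpow of the three values
  have hT0 : t₀ ^ β = (|r - s| ^ β) ^ 2 := by
    rw [ht₀, ← sq_abs, sq_rpow_aux (abs_nonneg _)]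
  have hT1 : t₁ ^ β = ((r + s) ^ β) ^ 2 := by
    rw [ht₁, sq_rpow_aux (by positivity)]
  have hT : t ^ β = (d ^ β) ^ 2 := by rw [ht, sq_rpow_aux hd.le]
  -- endpoint 1
  have hE1 : P ^ 2 + Q ^ 2 - B * (r ^ 2 + s ^ 2 - t₁) ≤ C * t₁ ^ β := by
    have hm := midpt_aux hβ0 hβ1 hr.le hs.le
    have hnn : 0 ≤ P + Q := by positivity
    have hsq : (P + Q) ^ 2 ≤ (2 / 2 ^ β * (r + s) ^ β) ^ 2 := pow_le_pow_left₀ hnn hm 2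
    have hlhs : P ^ 2 + Q ^ 2 - B * (r ^ 2 + s ^ 2 - t₁) = (P + Q) ^ 2 := by
      rw [ht₁]; linear_combination 2 * hBrs
    rw [hlhs, hT1]
    calc (P + Q) ^ 2 ≤ (2 / 2 ^ β * (r + s) ^ β) ^ 2 := hsq
      _ = C * ((r + s) ^ β) ^ 2 := by rw [hC]; field_simp; ring
  -- endpoint 0
  have habs : |P - Q| ≤ |r - s| ^ β := by
    rcases le_total s r with h | h
    · have hPQ : Q ≤ P := Real.rpow_le_rpow hs.le h hβ0.le
      rw [abs_of_nonneg (by linarith), abs_of_nonneg (by linarith)]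
      exact rpow_sub_le_aux hβ0.le hβ1.le hs.le h
    · have hPQ : P ≤ Q := Real.rpow_le_rpow hr.le h hβ0.le
      rw [abs_of_nonpos (by linarith), abs_of_nonpos (by linarith)]
      have h3 := rpow_sub_le_aux hβ0.le hβ1.le hr.le h
      have hss : -(r - s) = s - r := by ring
      rw [hss]
      rw [hP, hQ]
      linarith
  have hE0 : P ^ 2 + Q ^ 2 - B * (r ^ 2 + s ^ 2 - t₀) ≤ C * t₀ ^ β := by
    have hlhs : P ^ 2 + Q ^ 2 - B * (r ^ 2 + s ^ 2 - t₀) = (P - Q) ^ 2 := by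
      rw [ht₀]; linear_combination -2 * hBrs
    have hsq : (P - Q) ^ 2 ≤ (|r - s| ^ β) ^ 2 := by
      rw [← sq_abs (P - Q)]
      exact pow_le_pow_left₀ (abs_nonneg _) habs 2
    rw [hlhs, hT0]
    calc (P - Q) ^ 2 ≤ (|r - s| ^ β) ^ 2 := hsq
      _ = 1 * (|r - s| ^ β) ^ 2 := (one_mul _).symm
      _ ≤ C * (|r - s| ^ β) ^ 2 := mul_le_mul_of_nonneg_right hC1 (sq_nonneg _)
  -- convex combination
  set lam := (t₁ - t) / (t₁ - t₀) with hlam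
  set mu := (t - t₀) / (t₁ - t₀) with hmu
  have hden : (0:ℝ) < t₁ - t₀ := by linarith
  have hlam0 : 0 ≤ lam := div_nonneg (by linarith) hden.le
  have hmu0 : 0 ≤ mu := div_nonneg (by linarith) hden.le
  have hsum : lam + mu = 1 := by
    rw [hlam, hmu, ← add_div,
      show t₁ - t + (t - t₀) = t₁ - t₀ from by ring, div_self hden.ne']
  have hcomb : lam * t₀ + mu * t₁ = t := by
    rw [hlam, hmu]
    field_simp
    ring
  have hcc := (Real.concaveOn_rpow hβ0.le hβ1.le).2 (Set.mem_Ici.2 ht₀0) (Set.mem_Ici.2 ht₁0)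
      hlam0 hmu0 hsum
  simp only [smul_eq_mul] at hcc
  rw [hcomb] at hcc
  have hcc' := mul_le_mul_of_nonneg_left hcc hCpos.le
  have e1 := mul_le_mul_of_nonneg_left hE0 hlam0
  have e2 := mul_le_mul_of_nonneg_left hE1 hmu0
  have eqsplit : P ^ 2 + Q ^ 2 - B * (r ^ 2 + s ^ 2 - t)
      = lam * (P ^ 2 + Q ^ 2 - B * (r ^ 2 + s ^ 2 - t₀))
        + mu * (P ^ 2 + Q ^ 2 - B * (r ^ 2 + s ^ 2 - t₁)) := by
    linear_combination (-(P ^ 2 + Q ^ 2 - B * (r ^ 2 + s ^ 2))) * hsum - B * hcomb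
  have e3 : lam * (C * t₀ ^ β) + mu * (C * t₁ ^ β) = C * (lam * t₀ ^ β + mu * t₁ ^ β) := by
    ring
  rw [← hT]
  clear_value P Q B C t₀ t₁ t lam mu
  linarith [e1, e2, hcc', eqsplit, e3]

/-- `Y(x) = ‖x‖^(-2α) x - ‖x+μ‖^(-2α) (x+μ)`. -/
noncomputable def Ymap {n : ℕ} (μ : EuclideanSpace ℝ (Fin n)) (α : ℝ)
    (x : EuclideanSpace ℝ (Fin n)) : EuclideanSpace ℝ (Fin n) :=
  (‖x‖ ^ (-(2 * α))) • x - (‖x + μ‖ ^ (-(2 * α))) • (x + μ)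

theorem stmt10 {n : ℕ} (μ : EuclideanSpace ℝ (Fin n)) (hμ : μ ≠ 0)
    (α : ℝ) (hα : 0 < α) (hα2 : α < 1 / 2) :
    ∀ x : EuclideanSpace ℝ (Fin n), x ≠ 0 → x ≠ -μ →
      (inner ℝ (Ymap μ α x) (Ymap μ α x) : ℝ) ≤
        (inner ℝ (Ymap μ α (-(1 / 2 : ℝ) • μ)) (Ymap μ α (-(1 / 2 : ℝ) • μ)) : ℝ) := by
  intro x hx hxm
  have hy : x + μ ≠ 0 := by
    intro h
    exact hxm (eq_neg_of_add_eq_zero_left h)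
  set β := 1 - 2 * α with hβ
  have hβ0 : 0 < β := by rw [hβ]; linarith
  have hβ1 : β < 1 := by rw [hβ]; linarith
  have hba : -(2 * α) = β - 1 := by rw [hβ]; ring
  have hr : 0 < ‖x‖ := norm_pos_iff.2 hx
  have hs : 0 < ‖x + μ‖ := norm_pos_iff.2 hy
  have hd : 0 < ‖μ‖ := norm_pos_iff.2 hμ
  have htri1 : |‖x‖ - ‖x + μ‖| ≤ ‖μ‖ := by
    have h := abs_norm_sub_norm_le x (x + μ)
    have hxy : x - (x + μ) = -μ := by abel
    rwa [hxy, norm_neg] at h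
  have htri2 : ‖μ‖ ≤ ‖x‖ + ‖x + μ‖ := by
    have hμeq : μ = (x + μ) - x := by abel
    calc ‖μ‖ = ‖(x + μ) - x‖ := by rw [← hμeq]
      _ ≤ ‖x + μ‖ + ‖x‖ := norm_sub_le _ _
      _ = ‖x‖ + ‖x + μ‖ := by ring
  -- inner product value
  have hip : 2 * (inner ℝ x (x + μ) : ℝ) = ‖x‖ ^ 2 + ‖x + μ‖ ^ 2 - ‖μ‖ ^ 2 := by
    have h := norm_sub_sq_real (x + μ) x
    have hxy : (x + μ) - x = μ := by abel
    rw [hxy] at h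
    have hcm : (inner ℝ (x + μ) x : ℝ) = inner ℝ x (x + μ) := real_inner_comm _ _
    linarith [h, hcm]
  -- nonnegativity of the rpow coefficients
  have ha0 : 0 ≤ ‖x‖ ^ (β - 1) := Real.rpow_nonneg (norm_nonneg _) _
  have hb0 : 0 ≤ ‖x + μ‖ ^ (β - 1) := Real.rpow_nonneg (norm_nonneg _) _
  -- LHS expansion
  have hL : (inner ℝ (Ymap μ α x) (Ymap μ α x) : ℝ)
      = (‖x‖ ^ (β - 1)) ^ 2 * ‖x‖ ^ 2 + (‖x + μ‖ ^ (β - 1)) ^ 2 * ‖x + μ‖ ^ 2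
        - 2 * (‖x‖ ^ (β - 1) * ‖x + μ‖ ^ (β - 1)) * (inner ℝ x (x + μ) : ℝ) := by
    simp only [Ymap, hba]
    rw [real_inner_self_eq_norm_sq, norm_sub_sq_real, norm_smul, norm_smul,
      real_inner_smul_left, real_inner_smul_right, Real.norm_eq_abs, Real.norm_eq_abs,
      abs_of_nonneg ha0, abs_of_nonneg hb0]
    ring
  -- RHS computation
  have hx0 : (-(1 / 2 : ℝ) • μ : EuclideanSpace ℝ (Fin n)) + μ = (1 / 2 : ℝ) • μ := by
    module
  have hhalf : ‖(-(1 / 2) : ℝ)‖ = 1 / 2 := by norm_num [Real.norm_eq_abs]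
  have hhalf' : ‖((1 / 2) : ℝ)‖ = 1 / 2 := by norm_num [Real.norm_eq_abs]
  have hn0 : ‖(-(1 / 2 : ℝ) • μ : EuclideanSpace ℝ (Fin n))‖ = ‖μ‖ / 2 := by
    rw [norm_smul, hhalf]; ring
  have hn1 : ‖((1 / 2 : ℝ) • μ : EuclideanSpace ℝ (Fin n))‖ = ‖μ‖ / 2 := by
    rw [norm_smul, hhalf']; ring
  have hR : (inner ℝ (Ymap μ α (-(1 / 2 : ℝ) • μ)) (Ymap μ α (-(1 / 2 : ℝ) • μ)) : ℝ)
      = ((‖μ‖ / 2) ^ (β - 1)) ^ 2 * ‖μ‖ ^ 2 := by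
    simp only [Ymap, hba, hx0, hn0, hn1]
    rw [← smul_sub]
    have hvec : (-(1 / 2 : ℝ) • μ : EuclideanSpace ℝ (Fin n)) - (1 / 2 : ℝ) • μ = -μ := by
      module
    rw [hvec, real_inner_smul_left, real_inner_smul_right, inner_neg_neg,
      real_inner_self_eq_norm_sq]
    ring
  rw [hL, hR]
  have hkey := keyineq hβ0 hβ1 hr hs hd htri1 htri2
  have hprod : 2 * (‖x‖ ^ (β - 1) * ‖x + μ‖ ^ (β - 1)) * (inner ℝ x (x + μ) : ℝ)
      = ‖x‖ ^ (β - 1) * ‖x + μ‖ ^ (β - 1) * (‖x‖ ^ 2 + ‖x + μ‖ ^ 2 - ‖μ‖ ^ 2) := by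
    rw [← hip]; ring
  rw [hprod]
  exact hkey
end

section
/- Let $\mu\in\mathbb{R}^n\setminus\{0\}$, $\alpha\in(0,1/2)$, and $Y(x) = \|x\|^{-2\alpha}x - \|x+\mu\|^{-2\alpha}(x+\mu)$. Then for all $x\in\mathbb{R}^n\setminus\{0,-\mu\}$, $\|Y(x)\| \le \|Y(-\mu/2)\| = 2^{2\alpha}\|\mu\|^{1-2\alpha}$. -/
open RealInnerProductSpace

/-- Subadditivity of `x ^ p` on `[0,∞)` for `0 ≤ p ≤ 1`, real version. -/
lemma real_rpow_add_le_add_rpow (a b : ℝ) {p : ℝ} (ha : 0 ≤ a) (hb : 0 ≤ b)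
    (hp : 0 ≤ p) (hp1 : p ≤ 1) : (a + b) ^ p ≤ a ^ p + b ^ p := by
  lift a to NNReal using ha
  lift b to NNReal using hb
  exact_mod_cast NNReal.rpow_add_le_add_rpow a b hp hp1

lemma sq_rpow_sub_le {β : ℝ} (hβ0 : 0 ≤ β) (hβ1 : β ≤ 1) {s t : ℝ}
    (ht : 0 ≤ t) (hts : t ≤ s) :
    (s ^ β - t ^ β) * (s ^ β - t ^ β) ≤ ((s - t) * (s - t)) ^ β := by
  have hst : (0:ℝ) ≤ s - t := by linarith
  have h1 : s ^ β - t ^ β ≤ (s - t) ^ β := by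
    have h := real_rpow_add_le_add_rpow (s - t) t hst ht hβ0 hβ1
    rw [sub_add_cancel] at h
    linarith
  have h0 : 0 ≤ s ^ β - t ^ β := by
    have := Real.rpow_le_rpow ht hts hβ0
    linarith
  calc (s ^ β - t ^ β) * (s ^ β - t ^ β) ≤ (s - t) ^ β * ((s - t) ^ β) :=
        mul_le_mul h1 h1 h0 (Real.rpow_nonneg hst β)
    _ = ((s - t) * (s - t)) ^ β := (Real.mul_rpow hst hst).symm

lemma sq_rpow_add_le {β : ℝ} (hβ0 : 0 ≤ β) (hβ1 : β ≤ 1) {s t : ℝ}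
    (hs : 0 ≤ s) (ht : 0 ≤ t) :
    (s ^ β + t ^ β) * (s ^ β + t ^ β)
      ≤ 2 ^ (2 * (1 - β)) * (((s + t) * (s + t)) ^ β) := by
  have hcc := (Real.concaveOn_rpow hβ0 hβ1).2 (Set.mem_Ici.2 hs) (Set.mem_Ici.2 ht)
    (by norm_num : (0:ℝ) ≤ 1/2) (by norm_num : (0:ℝ) ≤ 1/2) (by norm_num)
  simp only [smul_eq_mul] at hcc
  have h2 : ((1:ℝ)/2 * s + 1/2 * t) ^ β = (1/2 : ℝ) ^ β * (s + t) ^ β := by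
    rw [show (1:ℝ)/2 * s + 1/2 * t = (1/2) * (s + t) by ring,
      Real.mul_rpow (by norm_num) (by linarith)]
  have hhalf : ((1:ℝ)/2) ^ β = 2 ^ (-β) := by
    rw [one_div, Real.inv_rpow (by norm_num), ← Real.rpow_neg (by norm_num)]
  have h1 : s ^ β + t ^ β ≤ 2 ^ (1 - β) * (s + t) ^ β := by
    have h3 : (2:ℝ) ^ (1 - β) = 2 * 2 ^ (-β) := by
      rw [show (1:ℝ) - β = 1 + (-β) by ring, Real.rpow_add (by norm_num),
        Real.rpow_one]
    rw [h3]
    rw [h2, hhalf] at hcc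
    linarith
  have hs' : 0 ≤ s ^ β + t ^ β := by positivity
  calc (s ^ β + t ^ β) * (s ^ β + t ^ β)
      ≤ (2 ^ (1 - β) * (s + t) ^ β) * (2 ^ (1 - β) * (s + t) ^ β) :=
        mul_le_mul h1 h1 hs' (by positivity)
    _ = (2 ^ (1 - β) * 2 ^ (1 - β)) * ((s + t) ^ β * (s + t) ^ β) := by ring
    _ = 2 ^ (2 * (1 - β)) * (((s + t) * (s + t)) ^ β) := by
        rw [← Real.rpow_add (by norm_num : (0:ℝ) < 2),
          ← Real.mul_rpow (by linarith) (by linarith)]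
        ring_nf

/-- The core scalar inequality. -/
lemma core_ineq {β s t c : ℝ} (hβ : 0 < β) (hβ1 : β < 1) (hs : 0 < s) (ht : 0 < t)
    (hc : |c| ≤ s * t) :
    s ^ (2*β) + t ^ (2*β) - 2 * (s ^ (β - 1) * t ^ (β - 1)) * c
      ≤ 2 ^ (2 * (1 - β)) * (s * s + t * t - 2 * c) ^ β := by
  have hst : (0:ℝ) < s * t := mul_pos hs ht
  set l : ℝ := (s * t + c) / (2 * (s * t)) with hl
  have hcl : -(s*t) ≤ c := (abs_le.1 hc).1
  have hcr : c ≤ s*t := (abs_le.1 hc).2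
  have hl0 : 0 ≤ l := div_nonneg (by linarith) (by linarith)
  have hl1 : l ≤ 1 := by
    rw [hl, div_le_one (by linarith)]; linarith
  have hcval : c = l * (s*t) + (1 - l) * (-(s*t)) := by
    rw [hl]; field_simp; ring
  have hPs : s ^ (β - 1) * s = s ^ β := by
    rw [← Real.rpow_add_one hs.ne']; norm_num
  have hPt : t ^ (β - 1) * t = t ^ β := by
    rw [← Real.rpow_add_one ht.ne']; norm_num
  have h2s : s ^ (2*β) = s ^ β * s ^ β := by
    rw [two_mul, Real.rpow_add hs]
  have h2t : t ^ (2*β) = t ^ β * t ^ β := by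
    rw [two_mul, Real.rpow_add ht]
  set P := s ^ β with hP
  set Q := t ^ β with hQ
  have hLHS : s ^ (2*β) + t ^ (2*β) - 2 * (s ^ (β - 1) * t ^ (β - 1)) * c
      = l * ((P - Q) * (P - Q)) + (1 - l) * ((P + Q) * (P + Q)) := by
    rw [h2s, h2t, hcval]
    have hprod : s ^ (β-1) * t ^ (β-1) * (s * t) = P * Q := by
      rw [← hPs, ← hPt]; ring
    linear_combination (2 - 4 * l) * hprod
  set D := (s - t) * (s - t) with hD
  set S := (s + t) * (s + t) with hS
  have hDn : (0:ℝ) ≤ D := mul_self_nonneg _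
  have hSn : (0:ℝ) ≤ S := mul_self_nonneg _
  have hK1 : (1:ℝ) ≤ 2 ^ (2 * (1 - β)) := by
    have h := Real.rpow_le_rpow_of_exponent_le (by norm_num : (1:ℝ) ≤ 2)
      (show (0:ℝ) ≤ 2*(1-β) by nlinarith)
    simpa using h
  have hKn : (0:ℝ) ≤ 2 ^ (2 * (1 - β)) := by linarith
  have hsub : (P - Q) * (P - Q) ≤ D ^ β := by
    rcases le_total t s with h | h
    · exact sq_rpow_sub_le hβ.le hβ1.le ht.le h
    · have := sq_rpow_sub_le hβ.le hβ1.le hs.le h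
      rw [hP, hQ, hD]
      calc (s ^ β - t ^ β) * (s ^ β - t ^ β)
          = (t ^ β - s ^ β) * (t ^ β - s ^ β) := by ring
        _ ≤ ((t - s) * (t - s)) ^ β := this
        _ = ((s - t) * (s - t)) ^ β := by ring_nf
  have hadd : (P + Q) * (P + Q) ≤ 2 ^ (2 * (1 - β)) * S ^ β :=
    sq_rpow_add_le hβ.le hβ1.le hs.le ht.le
  have hconc : l * D ^ β + (1 - l) * S ^ β ≤ (l * D + (1 - l) * S) ^ β := by
    have := (Real.concaveOn_rpow hβ.le hβ1.le).2 (Set.mem_Ici.2 hDn)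
      (Set.mem_Ici.2 hSn) hl0 (by linarith : (0:ℝ) ≤ 1 - l) (by ring)
    simpa [smul_eq_mul] using this
  have hu : l * D + (1 - l) * S = s * s + t * t - 2 * c := by
    rw [hD, hS, hcval]; ring
  rw [hLHS, ← hu]
  have hDβ : (0:ℝ) ≤ D ^ β := Real.rpow_nonneg hDn β
  have hSβ : (0:ℝ) ≤ S ^ β := Real.rpow_nonneg hSn β
  calc l * ((P - Q) * (P - Q)) + (1 - l) * ((P + Q) * (P + Q))
      ≤ l * (2 ^ (2*(1-β)) * D ^ β) + (1 - l) * (2 ^ (2*(1-β)) * S ^ β) := by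
        have e1 : (P - Q) * (P - Q) ≤ 2 ^ (2*(1-β)) * D ^ β :=
          hsub.trans (le_mul_of_one_le_left hDβ hK1)
        have e2 := hadd
        have f1 := mul_le_mul_of_nonneg_left e1 hl0
        have f2 := mul_le_mul_of_nonneg_left e2 (by linarith : (0:ℝ) ≤ 1 - l)
        linarith
    _ = 2 ^ (2*(1-β)) * (l * D ^ β + (1 - l) * S ^ β) := by ring
    _ ≤ 2 ^ (2*(1-β)) * (l * D + (1 - l) * S) ^ β :=
        mul_le_mul_of_nonneg_left hconc hKn

theorem stmt11 {n : ℕ} (μ : EuclideanSpace ℝ (Fin n)) (hμ : μ ≠ 0)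
    (α : ℝ) (hα : 0 < α) (hα2 : α < 1 / 2) :
    (∀ x : EuclideanSpace ℝ (Fin n), x ≠ 0 → x ≠ -μ →
        ‖Ymap μ α x‖ ≤ ‖Ymap μ α (-(1 / 2 : ℝ) • μ)‖) ∧
      ‖Ymap μ α (-(1 / 2 : ℝ) • μ)‖ = 2 ^ (2 * α) * ‖μ‖ ^ (1 - 2 * α) := by
  have hμn : (0:ℝ) < ‖μ‖ := norm_pos_iff.2 hμ
  -- value at the midpoint
  have hval : ‖Ymap μ α (-(1 / 2 : ℝ) • μ)‖ = 2 ^ (2 * α) * ‖μ‖ ^ (1 - 2 * α) := by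
    have hy : (-(1/2:ℝ) • μ) + μ = (1/2:ℝ) • μ := by module
    have hnorm1 : ‖(-(1/2:ℝ)) • μ‖ = (1/2) * ‖μ‖ := by
      rw [norm_smul]; norm_num
    have hnorm2 : ‖((1/2:ℝ)) • μ‖ = (1/2) * ‖μ‖ := by
      rw [norm_smul]; norm_num
    set r : ℝ := ((1/2) * ‖μ‖) ^ (-(2*α)) with hr
    have hrpos : 0 < r := Real.rpow_pos_of_pos (by positivity) _
    have hvec : Ymap μ α (-(1/2:ℝ) • μ) = (-r) • μ := by
      rw [Ymap, hy, hnorm1, hnorm2, ← hr]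
      module
    rw [hvec, norm_smul]
    rw [Real.norm_eq_abs, abs_neg, abs_of_pos hrpos, hr]
    rw [Real.mul_rpow (by norm_num) hμn.le]
    have hhalf : ((1:ℝ)/2) ^ (-(2*α)) = 2 ^ (2*α) := by
      rw [one_div, Real.inv_rpow (by norm_num), ← Real.rpow_neg (by norm_num),
        neg_neg]
    have hmu : ‖μ‖ ^ (-(2*α)) * ‖μ‖ = ‖μ‖ ^ (1 - 2*α) := by
      rw [show (1:ℝ) - 2*α = -(2*α) + 1 by ring, Real.rpow_add hμn,
        Real.rpow_one]
    rw [hhalf, mul_assoc, hmu]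
  refine ⟨fun x hx0 hxμ => ?_, hval⟩
  rw [hval]
  set β : ℝ := 1 - 2*α with hβdef
  have hβ : 0 < β := by rw [hβdef]; linarith
  have hβ1 : β < 1 := by rw [hβdef]; linarith
  have hexp : -(2*α) = β - 1 := by rw [hβdef]; ring
  set s : ℝ := ‖x‖ with hsdef
  set t : ℝ := ‖x + μ‖ with htdef
  set c : ℝ := (inner ℝ x (x + μ) : ℝ) with hcdef
  have hs : 0 < s := norm_pos_iff.2 hx0
  have ht : 0 < t := by
    rw [htdef]
    apply norm_pos_iff.2
    intro h
    exact hxμ (by rw [eq_neg_of_add_eq_zero_left h])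
  have hc : |c| ≤ s * t := abs_real_inner_le_norm x (x + μ)
  have ha : (0:ℝ) ≤ s ^ (β - 1) := Real.rpow_nonneg hs.le _
  have hb : (0:ℝ) ≤ t ^ (β - 1) := Real.rpow_nonneg ht.le _
  -- ‖Y‖² expansion
  have hY2 : ‖Ymap μ α x‖ ^ 2
      = s ^ (2*β) + t ^ (2*β) - 2 * (s ^ (β - 1) * t ^ (β - 1)) * c := by
    rw [Ymap, hexp]
    rw [norm_sub_sq_real, norm_smul, norm_smul, real_inner_smul_left,
      real_inner_smul_right]
    rw [Real.norm_eq_abs, Real.norm_eq_abs, abs_of_nonneg ha, abs_of_nonneg hb]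
    have hPs : s ^ (β - 1) * s = s ^ β := by
      rw [← Real.rpow_add_one hs.ne']; norm_num
    have hPt : t ^ (β - 1) * t = t ^ β := by
      rw [← Real.rpow_add_one ht.ne']; norm_num
    have h2s : s ^ (2*β) = s ^ β * s ^ β := by rw [two_mul, Real.rpow_add hs]
    have h2t : t ^ (2*β) = t ^ β * t ^ β := by rw [two_mul, Real.rpow_add ht]
    rw [← hsdef, ← htdef, ← hcdef, h2s, h2t, ← hPs, ← hPt]
    ring
  have huμ : s * s + t * t - 2 * c = ‖μ‖ * ‖μ‖ := by
    have h := norm_sub_sq_real (x + μ) x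
    rw [add_sub_cancel_left, real_inner_comm, ← hsdef, ← htdef, ← hcdef] at h
    rw [pow_two, pow_two, pow_two] at h
    linarith
  have hcore := core_ineq hβ hβ1 hs ht hc
  rw [huμ] at hcore
  have hR2 : (2 ^ (2*α) * ‖μ‖ ^ (1 - 2*α)) ^ 2
      = 2 ^ (2*(1-β)) * (‖μ‖ * ‖μ‖) ^ β := by
    rw [mul_pow, pow_two, pow_two, ← Real.rpow_add (by norm_num : (0:ℝ) < 2),
      ← Real.rpow_add hμn, Real.mul_rpow hμn.le hμn.le]
    congr 1
    · congr 1; rw [hβdef]; ring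
    · rw [hβdef, Real.rpow_add hμn]
  have hfin : ‖Ymap μ α x‖ ^ 2 ≤ (2 ^ (2*α) * ‖μ‖ ^ (1 - 2*α)) ^ 2 := by
    rw [hY2, hR2]; exact hcore
  have hRn : (0:ℝ) ≤ 2 ^ (2*α) * ‖μ‖ ^ (1 - 2*α) := by positivity
  nlinarith [norm_nonneg (Ymap μ α x), hfin, hRn]
end

section
/- Let $K = \mathrm{diag}(K_1,K_2,K_3)$ with $K_1 > K_2 > K_3 \ge 1$, and define $s_K(R) = \sum_{i=1}^3 K_i (R^\top e_i) \times e_i$ for $R\in SO(3)$. Then the set of $R\in SO(3)$ with $s_K(R)=0$ is exactly $\{I, \mathrm{diag}(1,-1,-1), \mathrm{diag}(-1,1,-1), \mathrm{diag}(-1,-1,1)\}$. -/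
open Matrix

set_option maxHeartbeats 1000000

/-- `s_K(R) = ∑ᵢ Kᵢ (Rᵀ eᵢ) × eᵢ`. -/
noncomputable def sK (K : Fin 3 → ℝ) (R : Matrix (Fin 3) (Fin 3) ℝ) : Fin 3 → ℝ :=
  ∑ i, K i • crossProduct (Rᵀ.mulVec (Pi.single i 1)) (Pi.single i 1)

theorem stmt14 (K₁ K₂ K₃ : ℝ) (h₃ : 1 ≤ K₃) (h₂₃ : K₃ < K₂) (h₁₂ : K₂ < K₁) :
    ∀ R : Matrix (Fin 3) (Fin 3) ℝ, Rᵀ * R = 1 → R.det = 1 →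
      (sK ![K₁, K₂, K₃] R = 0 ↔
        R = 1 ∨ R = Matrix.diagonal ![1, -1, -1] ∨
          R = Matrix.diagonal ![-1, 1, -1] ∨ R = Matrix.diagonal ![-1, -1, 1]) := by
  intro R hO hdet
  have hO' : R * Rᵀ = 1 := mul_eq_one_comm.mp hO
  set K : Fin 3 → ℝ := ![K₁, K₂, K₃] with hK
  constructor
  · intro hs
    have h0 := congrFun hs 0
    have h1 := congrFun hs 1
    have h2 := congrFun hs 2
    simp [sK, cross_apply, mulVec, dotProduct, Fin.sum_univ_three, hK] at h0 h1 h2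
    -- symmetry of S = diagonal K * R
    have hsym : (diagonal K * R)ᵀ = diagonal K * R := by
      ext i j
      fin_cases i <;> fin_cases j <;>
        simp [transpose_apply, diagonal_mul, hK] <;> linarith
    have hKK : (diagonal K * R) * (diagonal K * R) = diagonal (fun i => K i * K i) := by
      nth_rewrite 2 [← hsym]
      rw [transpose_mul, diagonal_transpose, mul_assoc, ← mul_assoc R,
        hO', one_mul, diagonal_mul_diagonal]
    have hcomm : (diagonal K * R) * diagonal (fun i => K i * K i)
        = diagonal (fun i => K i * K i) * (diagonal K * R) := by
      rw [← hKK, ← mul_assoc]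
    have hoff : ∀ i j : Fin 3, i ≠ j → R i j = 0 := by
      intro i j hij
      have h := congrFun (congrFun hcomm i) j
      simp only [mul_diagonal, diagonal_mul] at h
      have hfac : (K i * R i j) * (K j * K j - K i * K i) = 0 := by linear_combination h
      fin_cases i <;> fin_cases j <;>
        first
        | exact absurd rfl hij
        | (simp only [hK] at hfac
           simp at hfac ⊢
           rcases hfac with (h' | h') | h'
           · nlinarith
           · exact h'
           · nlinarith)
    -- diagonal entries ±1
    have hsq : ∀ i : Fin 3, R i i = 1 ∨ R i i = -1 := by
      intro i
      have := congrFun (congrFun hO i) i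
      simp [mul_apply, Fin.sum_univ_three, transpose_apply, one_apply] at this
      have h2 : R i i * R i i = 1 := by
        fin_cases i <;> simp_all [hoff 0 1, hoff 0 2, hoff 1 0, hoff 1 2, hoff 2 0, hoff 2 1]
      have : (R i i - 1) * (R i i + 1) = 0 := by ring_nf; linarith
      rcases mul_eq_zero.mp this with h | h
      · left; linarith
      · right; linarith
    have hd : R 0 0 * R 1 1 * R 2 2 = 1 := by
      rw [det_fin_three] at hdet
      rw [hoff 0 1 (by decide), hoff 0 2 (by decide), hoff 1 0 (by decide),
        hoff 1 2 (by decide), hoff 2 0 (by decide), hoff 2 1 (by decide)] at hdet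
      linarith [hdet]
    have e0 := hsq 0; have e1 := hsq 1; have e2 := hsq 2
    have hR : ∀ v : Fin 3 → ℝ, R 0 0 = v 0 → R 1 1 = v 1 → R 2 2 = v 2 →
        R = diagonal v := by
      intro v hv0 hv1 hv2
      ext i j
      rcases eq_or_ne i j with rfl | hij
      · fin_cases i <;> simp [diagonal, *]
      · rw [hoff i j hij, diagonal_apply_ne _ hij]
    rcases e0 with e0 | e0 <;> rcases e1 with e1 | e1 <;> rcases e2 with e2 | e2
    · left
      have : R = diagonal ![1,1,1] := hR ![1,1,1] e0 e1 e2
      rw [this]; ext i j; fin_cases i <;> fin_cases j <;> simp [one_apply]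
    · exfalso; rw [e0, e1, e2] at hd; norm_num at hd
    · exfalso; rw [e0, e1, e2] at hd; norm_num at hd
    · right; left; exact hR ![1,-1,-1] e0 e1 e2
    · exfalso; rw [e0, e1, e2] at hd; norm_num at hd
    · right; right; left; exact hR ![-1,1,-1] e0 e1 e2
    · right; right; right; exact hR ![-1,-1,1] e0 e1 e2
    · exfalso; rw [e0, e1, e2] at hd; norm_num at hd
  · rintro (rfl | rfl | rfl | rfl) <;>
      · funext k
        fin_cases k <;>
          simp [sK, cross_apply, mulVec, dotProduct, Fin.sum_univ_three, hK,
            diagonal, one_apply]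
end

section
/- Let $K = \mathrm{diag}(K_1,K_2,K_3)$ with $K_1 > K_2 > K_3 \ge 1$, $s_K(R) = \sum_{i=1}^3 K_i(R^\top e_i)\times e_i$, and let $\mathcal{S} = \{R\in SO(3) : R_{ii} \ge 0 \text{ for all } i,\ R_{ij}R_{ji} \le 0 \text{ for all } i\ne j\}$. Then for all $R\in\mathcal{S}$, $s_K(R)^\top s_K(R) \ge \mathrm{tr}(K(I-R))$. -/
open Matrix

lemma crossq (p q x y : ℝ) (hp : 0 < p) (hq : 0 < q) (hxy : x * y ≤ 0) :
    p^2 * x^2 + q^2 * y^2 ≤ (p * x - q * y)^2 := by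
  nlinarith [mul_nonneg (mul_nonneg hp.le hq.le) (neg_nonneg.2 hxy)]

lemma diagb (p a b c : ℝ) (hp : 1 ≤ p) (ha : 0 ≤ a) (r : a^2 + b^2 + c^2 = 1) :
    p * (1 - a) ≤ p^2 * b^2 + p^2 * c^2 := by
  have ha1 : a ≤ 1 := by nlinarith [sq_nonneg b, sq_nonneg c]
  nlinarith [mul_nonneg (mul_nonneg (by linarith : (0:ℝ) ≤ p) ha) (sub_nonneg.2 ha1),
    mul_nonneg (by nlinarith : (0:ℝ) ≤ p^2 - p) (sq_nonneg b),
    mul_nonneg (by nlinarith : (0:ℝ) ≤ p^2 - p) (sq_nonneg c)]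

lemma key (K₁ K₂ K₃ a b c d e f g h i : ℝ)
    (h₃ : 1 ≤ K₃) (h₂₃ : K₃ < K₂) (h₁₂ : K₂ < K₁)
    (r1 : a^2 + b^2 + c^2 = 1) (r2 : d^2 + e^2 + f^2 = 1) (r3 : g^2 + h^2 + i^2 = 1)
    (ha : 0 ≤ a) (he : 0 ≤ e) (hi : 0 ≤ i)
    (hbd : b * d ≤ 0) (hcg : c * g ≤ 0) (hfh : f * h ≤ 0) :
    K₁ * (1 - a) + K₂ * (1 - e) + K₃ * (1 - i) ≤
      (K₃ * h - K₂ * f)^2 + (K₁ * c - K₃ * g)^2 + (K₂ * d - K₁ * b)^2 := by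
  have hK3 : (0:ℝ) < K₃ := by linarith
  have hK2 : (0:ℝ) < K₂ := by linarith
  have hK1 : (0:ℝ) < K₁ := by linarith
  have t1 := crossq K₃ K₂ h f hK3 hK2 (by linarith [hfh] : h * f ≤ 0)
  have t2 := crossq K₁ K₃ c g hK1 hK3 hcg
  have t3 := crossq K₂ K₁ d b hK2 hK1 (by linarith [hbd] : d * b ≤ 0)
  have s1 := diagb K₁ a b c (by linarith) ha r1
  have s2 := diagb K₂ e d f (by linarith) he (by linarith [r2])
  have s3 := diagb K₃ i g h (by linarith) hi (by linarith [r3])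
  linarith

theorem stmt15 (K₁ K₂ K₃ : ℝ) (h₃ : 1 ≤ K₃) (h₂₃ : K₃ < K₂) (h₁₂ : K₂ < K₁) :
    ∀ R : Matrix (Fin 3) (Fin 3) ℝ, Rᵀ * R = 1 → R.det = 1 →
      (∀ i, 0 ≤ R i i) → (∀ i j, i ≠ j → R i j * R j i ≤ 0) →
      (Matrix.diagonal ![K₁, K₂, K₃] * (1 - R)).trace ≤
        sK ![K₁, K₂, K₃] R ⬝ᵥ sK ![K₁, K₂, K₃] R := by
  intro R hR hdet hdiag hoff
  have hR' : R * Rᵀ = 1 := by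
    rw [mul_eq_one_comm] at hR; exact hR
  have r1 : R 0 0 ^ 2 + R 0 1 ^ 2 + R 0 2 ^ 2 = 1 := by
    have := congrFun (congrFun hR' 0) 0
    simp [Matrix.mul_apply, Fin.sum_univ_three, Matrix.transpose_apply] at this
    nlinarith [this]
  have r2 : R 1 0 ^ 2 + R 1 1 ^ 2 + R 1 2 ^ 2 = 1 := by
    have := congrFun (congrFun hR' 1) 1
    simp [Matrix.mul_apply, Fin.sum_univ_three, Matrix.transpose_apply] at this
    nlinarith [this]
  have r3 : R 2 0 ^ 2 + R 2 1 ^ 2 + R 2 2 ^ 2 = 1 := by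
    have := congrFun (congrFun hR' 2) 2
    simp [Matrix.mul_apply, Fin.sum_univ_three, Matrix.transpose_apply] at this
    nlinarith [this]
  have hs : sK ![K₁, K₂, K₃] R = ![K₃ * R 2 1 - K₂ * R 1 2,
      K₁ * R 0 2 - K₃ * R 2 0, K₂ * R 1 0 - K₁ * R 0 1] := by
    funext j
    fin_cases j <;>
      simp [sK, crossProduct, Matrix.mulVec, Matrix.transpose_apply, Fin.sum_univ_three,
        dotProduct, Pi.single_apply] <;> ring
  rw [hs]
  have htr : (Matrix.diagonal ![K₁, K₂, K₃] * (1 - R)).trace =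
      K₁ * (1 - R 0 0) + K₂ * (1 - R 1 1) + K₃ * (1 - R 2 2) := by
    simp [Matrix.trace, Matrix.diag, Matrix.mul_apply, Fin.sum_univ_three,
      Matrix.diagonal, Matrix.one_apply]
  rw [htr]
  have := key K₁ K₂ K₃ (R 0 0) (R 0 1) (R 0 2) (R 1 0) (R 1 1) (R 1 2) (R 2 0) (R 2 1) (R 2 2)
    h₃ h₂₃ h₁₂ r1 r2 r3 (hdiag 0) (hdiag 1) (hdiag 2)
    (hoff 0 1 (by decide)) (hoff 0 2 (by decide)) (hoff 1 2 (by decide))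
  simp only [dotProduct, Fin.sum_univ_three, Matrix.cons_val_zero,
    Matrix.cons_val_one, Matrix.head_cons, Matrix.cons_val_two, Matrix.tail_cons]
  nlinarith [this]
end
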